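/- Let n ≥ 2 be an integer and n′ = n/(n−1). Let A be a finite-valued Young function satisfying the ∇₂-condition globally, with Young conjugate Ã, and let N be a Young function. Let Θ(s) = s A⁻¹( (1/s) ∫_{s^{−1/n′}}^∞ Ã( r ∫₀^{1/r} N⁻¹(1/ρ) dρ ) r^{−(n′+1)} dr ), with generalized right-continuous inverse Θ⁻¹(τ) = inf{ s > 0 : Θ(s) > τ }. Then condition (G) holds if and only if there exists δ′ > 0 with ∫₀^{δ′} Θ⁻¹(r)^{−1/n′} dr < ∞. -/

import Mathlib

/-!
With `e = 1/n′ = (n-1)/n`, the integrand of condition (G) is `s ^ (-e-1) Θ(s)`, and `Θ` is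
nondecreasing because convexity of `A` gives `A⁻¹(l t) ≤ l A⁻¹(t)` for `l ≥ 1`. For a
nondecreasing `Θ`, integrate against `μ = d(-s ^ (-e))` and apply the layer-cake formula:
`∫_{(0,δ]} Θ dμ = ∫_0^∞ μ((0,δ] ∩ {Θ > τ}) dτ`. Up to `μ((δ,∞)) = δ ^ (-e)`, the inner measure
is the tail `μ((Θ⁻¹(τ),∞)) = Θ⁻¹(τ) ^ (-e)`, and it vanishes once `Θ⁻¹(τ) > δ`; so the two
integrals are finite together.
-/

open MeasureTheory Set Filter
open scoped ENNReal

/-- A finite-valued Young function: convex, vanishing at `0`, nonnegative on `[0,∞)`,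
and not identically zero there. -/
structure IsYoung (A : ℝ → ℝ) : Prop where
  zero : A 0 = 0
  nonneg : ∀ t, 0 ≤ t → 0 ≤ A t
  convex : ConvexOn ℝ (Set.Ici 0) A
  nontrivial : ∃ t, 0 < t ∧ 0 < A t

/-- The Young conjugate `Ã(x) = sup { x t − A(t) : t ≥ 0 }`, with values in `[0,∞]`. -/
noncomputable def conjE (A : ℝ → ℝ) (x : ℝ≥0∞) : ℝ≥0∞ :=
  ⨆ t : {t : ℝ // 0 ≤ t}, (x * ENNReal.ofReal t.1 - ENNReal.ofReal (A t.1))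

/-- The generalized right-continuous inverse `F⁻¹(t) = inf { s ≥ 0 : F(s) > t }`. -/
noncomputable def rcInv (F : ℝ → ℝ) (t : ℝ) : ℝ :=
  sInf {s : ℝ | 0 ≤ s ∧ t < F s}

/-- The generalized right-continuous inverse of a Young function, acting on `[0,∞]`:
`A⁻¹(t) = inf { x ≥ 0 : A(x) > t }` (with `inf ∅ = ∞`). -/
noncomputable def einv (A : ℝ → ℝ) (t : ℝ≥0∞) : ℝ≥0∞ :=
  sInf {x : ℝ≥0∞ | t < ENNReal.ofReal (A x.toReal)}

/-- `Ξ(s) = (1/s) ∫_{s^{−1/n′}}^∞ Ã( r ∫₀^{1/r} N⁻¹(1/ρ) dρ ) r^{−(n′+1)} dr`,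
where `n′ = n/(n−1)`. -/
noncomputable def Xi (A N : ℝ → ℝ) (n : ℕ) (s : ℝ) : ℝ≥0∞ :=
  (ENNReal.ofReal s)⁻¹ *
    ∫⁻ r in Set.Ioi (s ^ (-(((n:ℝ)-1)/n))),
      conjE A (ENNReal.ofReal r *
          ∫⁻ ρ in Set.Ioc (0:ℝ) (1/r), ENNReal.ofReal (rcInv N (1/ρ))) *
        ENNReal.ofReal (r ^ (-((n:ℝ)/((n:ℝ)-1) + 1)))

/-- `Θ(s) = s A⁻¹(Ξ(s))`. -/
noncomputable def Theta (A N : ℝ → ℝ) (n : ℕ) (s : ℝ) : ℝ≥0∞ :=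
  ENNReal.ofReal s * einv A (Xi A N n s)

/-- Condition (G): `∫₀ s^{−1/n′} A⁻¹(Ξ(s)) ds < ∞` near zero. -/
def CondG (A N : ℝ → ℝ) (n : ℕ) : Prop :=
  ∃ δ > (0:ℝ),
    (∫⁻ s in Set.Ioc (0:ℝ) δ,
      ENNReal.ofReal (s ^ (-(((n:ℝ)-1)/n))) * einv A (Xi A N n s)) < ⊤

/-- `A` satisfies the `∇₂`-condition globally. -/
def Nabla2Global (A : ℝ → ℝ) : Prop :=
  ∃ c > (2:ℝ), ∀ t ≥ (0:ℝ), c * A t ≤ A (2 * t)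

/-- The generalized right-continuous inverse `Θ⁻¹(τ) = inf { s > 0 : Θ(s) > τ }` of an
`[0,∞]`-valued function on `(0,∞)`, with values in `[0,∞]` (`inf ∅ = ∞`). -/
noncomputable def invE (Θ : ℝ → ℝ≥0∞) (τ : ℝ) : ℝ≥0∞ :=
  sInf {x : ℝ≥0∞ | ∃ s : ℝ, 0 < s ∧ x = ENNReal.ofReal s ∧ ENNReal.ofReal τ < Θ s}

lemma IsYoung.mul_apply_le_apply_mul {A : ℝ → ℝ} (hA : IsYoung A) {l u : ℝ} (hl : 1 ≤ l) (hu : 0 ≤ u) :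
    l * A u ≤ A (l * u) := by
  have hl0 : 0 < l := one_pos.trans_le hl
  have hconv := hA.convex.2 (mem_Ici.2 (mul_nonneg hl0.le hu)) (mem_Ici.2 le_rfl)
    (inv_nonneg.2 hl0.le) (sub_nonneg.2 (inv_le_one_of_one_le₀ hl)) (add_sub_cancel _ _)
  simp only [smul_eq_mul, mul_zero, add_zero, inv_mul_cancel_left₀ hl0.ne', hA.zero] at hconv
  calc l * A u ≤ l * (l⁻¹ * A (l * u)) := by gcongr
    _ = A (l * u) := mul_inv_cancel_left₀ hl0.ne' _

lemma monotone_einv (A : ℝ → ℝ) : Monotone (einv A) :=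
  fun _ _ h => sInf_le_sInf fun _ hx => h.trans_lt hx

lemma IsYoung.einv_mul_le {A : ℝ → ℝ} (hA : IsYoung A) {l : ℝ} (hl : 1 ≤ l) (t : ℝ≥0∞) :
    einv A (ENNReal.ofReal l * t) ≤ ENNReal.ofReal l * einv A t := by
  have hl0 : 0 < l := one_pos.trans_le hl
  have hL0 : ENNReal.ofReal l ≠ 0 := ENNReal.ofReal_pos.2 hl0 |>.ne'
  rw [mul_comm (ENNReal.ofReal l) (einv A t),
    ← ENNReal.div_le_iff_le_mul (.inl hL0) (.inl ENNReal.ofReal_ne_top)]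
  refine le_sInf fun x (hx : t < ENNReal.ofReal (A x.toReal)) => ?_
  rw [ENNReal.div_le_iff_le_mul (.inl hL0) (.inl ENNReal.ofReal_ne_top), mul_comm x]
  refine sInf_le (show _ < ENNReal.ofReal (A (ENNReal.ofReal l * x).toReal) from ?_)
  rw [ENNReal.toReal_mul, ENNReal.toReal_ofReal hl0.le]
  calc ENNReal.ofReal l * t < ENNReal.ofReal l * ENNReal.ofReal (A x.toReal) :=
        (ENNReal.mul_lt_mul_iff_right hL0 ENNReal.ofReal_ne_top).2 hx
    _ = ENNReal.ofReal (l * A x.toReal) := (ENNReal.ofReal_mul hl0.le).symm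
    _ ≤ ENNReal.ofReal (A (l * x.toReal)) :=
        ENNReal.ofReal_le_ofReal (hA.mul_apply_le_apply_mul hl ENNReal.toReal_nonneg)

lemma IsYoung.monotone_mul_einv {A : ℝ → ℝ} (hA : IsYoung A) {F : ℝ → ℝ≥0∞}
    (hF : MonotoneOn F (Ioi 0)) :
    Monotone fun s => ENNReal.ofReal s * einv A ((ENNReal.ofReal s)⁻¹ * F s) := by
  intro s₁ s₂ hs
  rcases le_or_gt s₁ 0 with hs₁ | hs₁
  · simp [ENNReal.ofReal_of_nonpos hs₁]
  have hs₂ : 0 < s₂ := hs₁.trans_le hs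
  have hinv : (ENNReal.ofReal s₁)⁻¹ = ENNReal.ofReal (s₂ / s₁) * (ENNReal.ofReal s₂)⁻¹ := by
    rw [ENNReal.ofReal_div_of_pos hs₁, div_eq_mul_inv, mul_right_comm,
      ENNReal.mul_inv_cancel (ENNReal.ofReal_pos.2 hs₂).ne' ENNReal.ofReal_ne_top, one_mul]
  calc ENNReal.ofReal s₁ * einv A ((ENNReal.ofReal s₁)⁻¹ * F s₁)
      ≤ ENNReal.ofReal s₁ * einv A ((ENNReal.ofReal s₁)⁻¹ * F s₂) := by
        gcongr
        exact monotone_einv A (mul_le_mul_right (hF hs₁ hs₂ hs) _)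
    _ ≤ ENNReal.ofReal s₁ * (ENNReal.ofReal (s₂ / s₁) * einv A ((ENNReal.ofReal s₂)⁻¹ * F s₂)) := by
        rw [hinv, mul_assoc]
        exact mul_le_mul_right (hA.einv_mul_le ((one_le_div hs₁).2 hs) _) _
    _ = ENNReal.ofReal s₂ * einv A ((ENNReal.ofReal s₂)⁻¹ * F s₂) := by
        rw [← mul_assoc, ← ENNReal.ofReal_mul hs₁.le, mul_div_cancel₀ _ hs₁.ne']

lemma IsYoung.monotone_Theta {A : ℝ → ℝ} (hA : IsYoung A) (N : ℝ → ℝ) (n : ℕ) :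
    Monotone (Theta A N n) := by
  have he : 0 ≤ ((n : ℝ) - 1) / n := by
    rcases n.eq_zero_or_pos with rfl | hn
    · simp
    · exact div_nonneg (sub_nonneg.2 (Nat.one_le_cast.2 hn)) n.cast_nonneg
  refine hA.monotone_mul_einv fun s₁ hs₁ s₂ _ hs => lintegral_mono_set (Ioi_subset_Ioi ?_)
  exact Real.rpow_le_rpow_of_nonpos hs₁ hs (neg_nonpos.2 he)

/-- The measure `d(-s ^ (-e))` on `(0, ∞)`. -/
noncomputable def rpowTailMeasure (e : ℝ) : Measure ℝ :=
  (volume.restrict (Ioi 0)).withDensity fun s => ENNReal.ofReal (e * s ^ (-e - 1))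

instance (e : ℝ) : SFinite (rpowTailMeasure e) := by
  unfold rpowTailMeasure
  infer_instance

section rpowTailMeasure

variable {e : ℝ}

lemma rpowTailMeasure_Ioi (he : 0 < e) {a : ℝ} (ha : 0 < a) :
    rpowTailMeasure e (Ioi a) = ENNReal.ofReal a ^ (-e) := by
  have hexp : -e - 1 < -1 := by linarith
  rw [rpowTailMeasure, withDensity_apply _ measurableSet_Ioi,
    Measure.restrict_restrict measurableSet_Ioi, Ioi_inter_Ioi, max_eq_left ha.le,
    ← ofReal_integral_eq_lintegral_ofReal ((integrableOn_Ioi_rpow_of_lt hexp ha).const_mul e)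
      ((ae_restrict_iff' measurableSet_Ioi).2 (ae_of_all _ fun s hs =>
        mul_nonneg he.le (Real.rpow_nonneg (ha.trans hs).le _))),
    integral_const_mul, integral_Ioi_rpow_of_lt hexp ha, ENNReal.ofReal_rpow_of_pos ha]
  congr 1
  rw [show -e - 1 + 1 = -e by ring]
  field_simp

lemma rpowTailMeasure_Ioi_zero (he : 0 < e) : rpowTailMeasure e (Ioi 0) = ⊤ := by
  rw [rpowTailMeasure, withDensity_apply _ measurableSet_Ioi, Measure.restrict_restrict
    measurableSet_Ioi, inter_self]
  by_contra hfin
  have hnonneg : 0 ≤ᵐ[volume.restrict (Ioi 0)] fun s : ℝ => e * s ^ (-e - 1) :=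
    (ae_restrict_iff' measurableSet_Ioi).2 (ae_of_all _ fun s hs =>
      mul_nonneg he.le (Real.rpow_nonneg (le_of_lt hs) _))
  refine not_integrableOn_Ioi_rpow (-e - 1) ?_
  have hint : IntegrableOn (fun s : ℝ => e * s ^ (-e - 1)) (Ioi 0) :=
    ⟨by fun_prop, (hasFiniteIntegral_iff_ofReal hnonneg).2 (lt_top_iff_ne_top.2 hfin)⟩
  have := hint.const_mul e⁻¹
  simp only [← mul_assoc, inv_mul_cancel₀ he.ne', one_mul] at this
  exact this

lemma rpowTailMeasure_setOf_lt (he : 0 < e) (m : ℝ≥0∞) :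
    rpowTailMeasure e {s | m < ENNReal.ofReal s} = m ^ (-e) := by
  rcases eq_or_ne m ⊤ with rfl | hm
  · simp [ENNReal.top_rpow_of_neg (neg_neg_of_pos he)]
  rcases eq_or_ne m 0 with rfl | hm0
  · simp only [ENNReal.ofReal_pos, ENNReal.zero_rpow_of_neg (neg_neg_of_pos he)]
    exact rpowTailMeasure_Ioi_zero he
  have hpos : 0 < m.toReal := ENNReal.toReal_pos hm0 hm
  have hset : {s | m < ENNReal.ofReal s} = Ioi m.toReal := by
    ext s
    exact ENNReal.lt_ofReal_iff_toReal_lt hm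
  rw [hset, rpowTailMeasure_Ioi he hpos, ENNReal.ofReal_toReal hm]

lemma rpowTailMeasure_setOf_le_le (he : 0 < e) (m : ℝ≥0∞) :
    rpowTailMeasure e {s | m ≤ ENNReal.ofReal s} ≤ m ^ (-e) := by
  rcases eq_or_ne m 0 with rfl | hm0
  · simp [ENNReal.zero_rpow_of_neg (neg_neg_of_pos he)]
  have hsub : {s | m ≤ ENNReal.ofReal s} ⊆ {s | m < ENNReal.ofReal s} ∪ {m.toReal} := by
    intro s (hs : m ≤ ENNReal.ofReal s)
    refine hs.lt_or_eq.imp id fun heq => ?_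
    have hs0 : 0 < s := ENNReal.ofReal_pos.1 (heq ▸ pos_iff_ne_zero.2 hm0)
    rw [heq, ENNReal.toReal_ofReal hs0.le]
    rfl
  have hpt : rpowTailMeasure e {m.toReal} = 0 :=
    withDensity_absolutelyContinuous _ _ (measure_singleton _)
  calc rpowTailMeasure e {s | m ≤ ENNReal.ofReal s}
      ≤ rpowTailMeasure e {s | m < ENNReal.ofReal s} + rpowTailMeasure e {m.toReal} :=
        (measure_mono hsub).trans (measure_union_le _ _)
    _ = m ^ (-e) := by rw [hpt, add_zero, rpowTailMeasure_setOf_lt he]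

lemma setLIntegral_rpowTailMeasure (he : 0 ≤ e) {f : ℝ → ℝ≥0∞} (hf : Measurable f) (δ : ℝ) :
    ∫⁻ s in Ioc 0 δ, f s ∂rpowTailMeasure e
      = ENNReal.ofReal e * ∫⁻ s in Ioc 0 δ, ENNReal.ofReal (s ^ (-e - 1)) * f s := by
  rw [rpowTailMeasure, restrict_withDensity measurableSet_Ioc, Measure.restrict_restrict
    measurableSet_Ioc, Ioc_inter_Ioi, max_self, lintegral_withDensity_eq_lintegral_mul _
    (by fun_prop) hf, ← lintegral_const_mul' _ _ ENNReal.ofReal_ne_top]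
  simp only [Pi.mul_apply, ENNReal.ofReal_mul he, mul_assoc]

end rpowTailMeasure

lemma volume_Ioi_zero_setOf_ofReal_lt (x : ℝ≥0∞) :
    volume.restrict (Ioi 0) {τ : ℝ | ENNReal.ofReal τ < x} = x := by
  have hmeas : MeasurableSet {τ : ℝ | ENNReal.ofReal τ < x} :=
    measurableSet_lt ENNReal.measurable_ofReal measurable_const
  rw [Measure.restrict_apply hmeas]
  rcases eq_or_ne x ⊤ with rfl | hx
  · simp [ENNReal.ofReal_lt_top]
  have hset : {τ : ℝ | ENNReal.ofReal τ < x} ∩ Ioi 0 = Ioo 0 x.toReal := by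
    ext τ
    simp only [mem_inter_iff, mem_Ioi, mem_Ioo]
    exact ⟨fun h => ⟨h.2, (ENNReal.ofReal_lt_iff_lt_toReal h.2.le hx).1 h.1⟩,
      fun h => ⟨(ENNReal.ofReal_lt_iff_lt_toReal h.1.le hx).2 h.2, h.1⟩⟩
  rw [hset, Real.volume_Ioo, sub_zero, ENNReal.ofReal_toReal hx]

theorem lintegral_eq_lintegral_Ioi_measure_lt {α : Type*} [MeasurableSpace α] (μ : Measure α)
    [SFinite μ] {f : α → ℝ≥0∞} (hf : Measurable f) :
    ∫⁻ a, f a ∂μ = ∫⁻ τ in Ioi 0, μ {a | ENNReal.ofReal τ < f a} := by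
  have hS : MeasurableSet {p : α × ℝ | ENNReal.ofReal p.2 < f p.1} :=
    measurableSet_lt (ENNReal.measurable_ofReal.comp measurable_snd) (hf.comp measurable_fst)
  calc ∫⁻ a, f a ∂μ = ∫⁻ a, volume.restrict (Ioi 0) {τ : ℝ | ENNReal.ofReal τ < f a} ∂μ := by
        simp only [volume_Ioi_zero_setOf_ofReal_lt]
    _ = μ.prod (volume.restrict (Ioi 0)) {p : α × ℝ | ENNReal.ofReal p.2 < f p.1} :=
        (Measure.prod_apply hS).symm
    _ = ∫⁻ τ in Ioi 0, μ {a | ENNReal.ofReal τ < f a} := Measure.prod_apply_symm hS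

section invE

variable {Θ : ℝ → ℝ≥0∞}

lemma invE_le_ofReal {τ s : ℝ} (hs : 0 < s) (h : ENNReal.ofReal τ < Θ s) :
    invE Θ τ ≤ ENNReal.ofReal s :=
  sInf_le ⟨s, hs, rfl, h⟩

lemma monotone_invE (Θ : ℝ → ℝ≥0∞) : Monotone (invE Θ) := by
  refine fun τ₁ τ₂ hτ => sInf_le_sInf ?_
  rintro _ ⟨s, hs, rfl, h⟩
  exact ⟨s, hs, rfl, (ENNReal.ofReal_le_ofReal hτ).trans_lt h⟩

lemma Monotone.ofReal_lt_of_invE_lt (hΘ : Monotone Θ) {τ s : ℝ}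
    (h : invE Θ τ < ENNReal.ofReal s) : ENNReal.ofReal τ < Θ s := by
  obtain ⟨_, ⟨s₀, -, rfl, hs₀⟩, hlt⟩ := sInf_lt_iff.1 h
  exact hs₀.trans_le (hΘ (ENNReal.ofReal_lt_ofReal_iff'.1 hlt).1.le)

variable {e : ℝ}

lemma Monotone.invE_rpow_le (hΘ : Monotone Θ) (he : 0 < e) {δ : ℝ} (hδ : 0 < δ) (τ : ℝ) :
    invE Θ τ ^ (-e) ≤ (rpowTailMeasure e).restrict (Ioc 0 δ) {s | ENNReal.ofReal τ < Θ s}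
      + ENNReal.ofReal δ ^ (-e) := by
  have hsub : {s | invE Θ τ < ENNReal.ofReal s} ⊆
      {s | ENNReal.ofReal τ < Θ s} ∩ Ioc 0 δ ∪ Ioi δ := by
    intro s (hs : invE Θ τ < ENNReal.ofReal s)
    refine (le_or_gt s δ).imp (fun hsδ => ⟨hΘ.ofReal_lt_of_invE_lt hs, ?_, hsδ⟩) id
    exact ENNReal.ofReal_pos.1 (zero_le.trans_lt hs)
  calc invE Θ τ ^ (-e) = rpowTailMeasure e {s | invE Θ τ < ENNReal.ofReal s} :=
        (rpowTailMeasure_setOf_lt he _).symm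
    _ ≤ rpowTailMeasure e ({s | ENNReal.ofReal τ < Θ s} ∩ Ioc 0 δ) + rpowTailMeasure e (Ioi δ) :=
        (measure_mono hsub).trans (measure_union_le _ _)
    _ = _ := by rw [Measure.restrict_apply' measurableSet_Ioc, rpowTailMeasure_Ioi he hδ]

lemma rpowTailMeasure_restrict_setOf_lt_le (he : 0 < e) (δ τ : ℝ) :
    (rpowTailMeasure e).restrict (Ioc 0 δ) {s | ENNReal.ofReal τ < Θ s} ≤ invE Θ τ ^ (-e) := by
  rw [Measure.restrict_apply' measurableSet_Ioc]
  exact (measure_mono fun s (hs : s ∈ {s | _} ∩ Ioc 0 δ) => invE_le_ofReal hs.2.1 hs.1).trans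
    (rpowTailMeasure_setOf_le_le he _)

lemma setOf_lt_inter_Ioc_eq_empty {δ τ : ℝ} (h : ENNReal.ofReal δ < invE Θ τ) :
    {s | ENNReal.ofReal τ < Θ s} ∩ Ioc 0 δ = ∅ :=
  eq_empty_of_forall_notMem fun _ ⟨hs, hs₀, hsδ⟩ =>
    ((invE_le_ofReal hs₀ hs).trans (ENNReal.ofReal_le_ofReal hsδ)).not_gt h

lemma Monotone.setLIntegral_invE_rpow_lt_top (hΘ : Monotone Θ) (he : 0 < e) {δ : ℝ} (hδ : 0 < δ)
    (hfin : ∫⁻ s in Ioc 0 δ, Θ s ∂rpowTailMeasure e < ⊤) (δ' : ℝ) :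
    ∫⁻ τ in Ioc 0 δ', invE Θ τ ^ (-e) < ⊤ := by
  rw [lintegral_eq_lintegral_Ioi_measure_lt _ hΘ.measurable] at hfin
  calc ∫⁻ τ in Ioc 0 δ', invE Θ τ ^ (-e)
      ≤ ∫⁻ τ in Ioc 0 δ', ((rpowTailMeasure e).restrict (Ioc 0 δ) {s | ENNReal.ofReal τ < Θ s}
          + ENNReal.ofReal δ ^ (-e)) :=
        lintegral_mono fun τ => hΘ.invE_rpow_le he hδ τ
    _ ≤ (∫⁻ τ in Ioi 0, (rpowTailMeasure e).restrict (Ioc 0 δ) {s | ENNReal.ofReal τ < Θ s})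
          + ENNReal.ofReal δ ^ (-e) * volume (Ioc 0 δ') := by
        rw [lintegral_add_right _ measurable_const, setLIntegral_const]
        gcongr ?_ + _
        exact lintegral_mono_set Ioc_subset_Ioi_self
    _ < ⊤ := by
        rw [ENNReal.ofReal_rpow_of_pos hδ, Real.volume_Ioc]
        exact ENNReal.add_lt_top.2 ⟨hfin, ENNReal.mul_lt_top ENNReal.ofReal_lt_top
          ENNReal.ofReal_lt_top⟩

lemma invE_ne_zero_of_setLIntegral_rpow_lt_top (he : 0 < e) {δ' : ℝ} (hδ' : 0 < δ')
    (hfin : ∫⁻ τ in Ioc 0 δ', invE Θ τ ^ (-e) < ⊤) : invE Θ δ' ≠ 0 := by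
  intro h0
  refine hfin.ne (eq_top_iff.2 ?_)
  calc ⊤ = ∫⁻ _ in Ioc 0 δ', ⊤ := by simp [hδ']
    _ ≤ ∫⁻ τ in Ioc 0 δ', invE Θ τ ^ (-e) := by
        refine setLIntegral_mono' measurableSet_Ioc fun τ hτ => ?_
        have hτ0 : invE Θ τ = 0 := le_antisymm (h0 ▸ monotone_invE Θ hτ.2) zero_le
        rw [hτ0, ENNReal.zero_rpow_of_neg (neg_neg_of_pos he)]

lemma exists_setLIntegral_rpowTailMeasure_lt_top (hΘ : Measurable Θ) (he : 0 < e) {δ' : ℝ}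
    (hδ' : 0 < δ') (hfin : ∫⁻ τ in Ioc 0 δ', invE Θ τ ^ (-e) < ⊤) :
    ∃ δ > (0 : ℝ), ∫⁻ s in Ioc 0 δ, Θ s ∂rpowTailMeasure e < ⊤ := by
  obtain ⟨δ, -, hδ, hδlt⟩ := ENNReal.lt_iff_exists_real_btwn.1
    (pos_iff_ne_zero.2 (invE_ne_zero_of_setLIntegral_rpow_lt_top he hδ' hfin))
  refine ⟨δ, ENNReal.ofReal_pos.1 hδ, ?_⟩
  have hbound : ∀ τ ∈ Ioi (0 : ℝ),
      (rpowTailMeasure e).restrict (Ioc 0 δ) {s | ENNReal.ofReal τ < Θ s}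
        ≤ (Ioc 0 δ').indicator (fun τ => invE Θ τ ^ (-e)) τ := by
    intro τ hτ
    by_cases hτδ' : τ ≤ δ'
    · rw [indicator_of_mem (show τ ∈ Ioc 0 δ' from ⟨hτ, hτδ'⟩)]
      exact rpowTailMeasure_restrict_setOf_lt_le he δ τ
    · rw [Measure.restrict_apply' measurableSet_Ioc, setOf_lt_inter_Ioc_eq_empty
        (hδlt.trans_le (monotone_invE Θ (not_le.1 hτδ').le)), measure_empty]
      exact zero_le
  calc ∫⁻ s in Ioc 0 δ, Θ s ∂rpowTailMeasure e
      = ∫⁻ τ in Ioi 0, (rpowTailMeasure e).restrict (Ioc 0 δ) {s | ENNReal.ofReal τ < Θ s} :=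
        lintegral_eq_lintegral_Ioi_measure_lt _ hΘ
    _ ≤ ∫⁻ τ in Ioi 0, (Ioc 0 δ').indicator (fun τ => invE Θ τ ^ (-e)) τ :=
        setLIntegral_mono (((monotone_invE Θ).measurable.pow_const _).indicator
          measurableSet_Ioc) hbound
    _ = ∫⁻ τ in Ioc 0 δ', invE Θ τ ^ (-e) := by
        rw [lintegral_indicator measurableSet_Ioc, Measure.restrict_restrict measurableSet_Ioc,
          Ioc_inter_Ioi, max_self]
    _ < ⊤ := hfin

theorem Monotone.exists_setLIntegral_rpowTailMeasure_lt_top_iff (hΘ : Monotone Θ) (he : 0 < e) :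
    (∃ δ > (0 : ℝ), ∫⁻ s in Ioc 0 δ, Θ s ∂rpowTailMeasure e < ⊤) ↔
      ∃ δ' > (0 : ℝ), ∫⁻ τ in Ioc 0 δ', invE Θ τ ^ (-e) < ⊤ :=
  ⟨fun ⟨_, hδ, hfin⟩ => ⟨1, one_pos, hΘ.setLIntegral_invE_rpow_lt_top he hδ hfin 1⟩,
    fun ⟨_, hδ', hfin⟩ => exists_setLIntegral_rpowTailMeasure_lt_top hΘ.measurable he hδ' hfin⟩

end invE

theorem condG_iff_inv_integrable_general (n : ℕ) (hn : 2 ≤ n) (A N : ℝ → ℝ)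
    (hA : IsYoung A) :
    CondG A N n ↔
    ∃ δ' > (0:ℝ),
      (∫⁻ r in Set.Ioc (0:ℝ) δ',
        (invE (Theta A N n) r) ^ (-(((n:ℝ)-1)/n))) < ⊤ := by
  have hn' : (2 : ℝ) ≤ n := by exact_mod_cast hn
  have he : 0 < ((n : ℝ) - 1) / n := div_pos (by linarith) (by linarith)
  have hΘ := hA.monotone_Theta N n
  rw [CondG, ← hΘ.exists_setLIntegral_rpowTailMeasure_lt_top_iff he]
  refine exists_congr fun δ => and_congr_right fun _ => ?_
  have hintegrand : ∀ s ∈ Ioc (0 : ℝ) δ,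
      ENNReal.ofReal (s ^ (-(((n : ℝ) - 1) / n) - 1)) * Theta A N n s
        = ENNReal.ofReal (s ^ (-(((n : ℝ) - 1) / n))) * einv A (Xi A N n s) := by
    intro s hs
    rw [Theta, ← mul_assoc, ← ENNReal.ofReal_mul (Real.rpow_nonneg hs.1.le _),
      Real.rpow_sub_one hs.1.ne', div_mul_cancel₀ _ hs.1.ne']
  rw [setLIntegral_rpowTailMeasure he.le hΘ.measurable,
    setLIntegral_congr_fun measurableSet_Ioc hintegrand]
  exact ⟨ENNReal.mul_lt_top ENNReal.ofReal_lt_top,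
    fun h => ENNReal.lt_top_of_mul_ne_top_right h.ne (ENNReal.ofReal_pos.2 he).ne'⟩

theorem condG_iff_inv_integrable (n : ℕ) (hn : 2 ≤ n) (A N : ℝ → ℝ)
    (hA : IsYoung A) (hN : IsYoung N) (hnabla : Nabla2Global A) :
    CondG A N n ↔
    ∃ δ' > (0:ℝ),
      (∫⁻ r in Set.Ioc (0:ℝ) δ',
        (invE (Theta A N n) r) ^ (-(((n:ℝ)-1)/n))) < ⊤ :=
  condG_iff_inv_integrable_general n hn A N hA
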